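/- There exists a Gibbs-preserving stochastic matrix mapping p to q (that is, a stochastic matrix Λ with Λγ = γ and Λp = q) if and only if the embedded vector Γ(p) majorises Γ(q), where Γ is the embedding with respect to the rational Gibbs distribution γ. -/

import Mathlib

open Finset

/-- The sum of the `k` largest entries of `p` (as a supremum over subsets of size `k`). -/
noncomputable def sumLargest {ι : Type*} [Fintype ι] (p : ι → ℝ) (k : ℕ) : ℝ :=
  sSup {x : ℝ | ∃ s : Finset ι, s.card = k ∧ ∑ i ∈ s, p i = x}

/-- `p` majorises `q`: for every `k`, the sum of the `k` largest entries of `p`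
is at least the sum of the `k` largest entries of `q`. -/
def Majorizes {ι : Type*} [Fintype ι] (p q : ι → ℝ) : Prop :=
  ∀ k : ℕ, k ≤ Fintype.card ι → sumLargest q k ≤ sumLargest p k

/-- A probability vector: nonnegative entries summing to 1. -/
def IsProbVec {ι : Type*} [Fintype ι] (p : ι → ℝ) : Prop :=
  (∀ i, 0 ≤ p i) ∧ ∑ i, p i = 1

open Matrix

/-! Let `E` be the matrix of `Γ` and `R` the matrix summing over boxes. Then `R * E = 1`, and
`Λ ↦ E * Λ * R`, `M ↦ R * M * E` translate stochastic matrices fixing `γ` into doubly stochastic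
matrices on the `N` points and back (fixing `γ` becomes fixing the uniform vector). So the
theorem is the Hardy–Littlewood–Pólya theorem for `Γ p` and `Γ q`: `x = M *ᵥ y` for a doubly
stochastic `M` iff `y` majorises `x` and both have the same sum. Necessity is the bound of a
weighted sum, with weights in `[0, 1]` summing to `k`, by the `k` largest entries. For
sufficiency, a hyperplane separating `x` from the convex hull of the permutations of `y` is
ruled out by Abel summation against its sorted coefficients. -/

section SumLargest

variable {ι : Type*} [Fintype ι]

lemma bddAbove_sumLargest_set (p : ι → ℝ) (k : ℕ) :
    BddAbove {x : ℝ | ∃ s : Finset ι, s.card = k ∧ ∑ i ∈ s, p i = x} :=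
  (Set.finite_range fun s : Finset ι => ∑ i ∈ s, p i).subset
    (by rintro x ⟨s, -, rfl⟩; exact ⟨s, rfl⟩) |>.bddAbove

lemma le_sumLargest (p : ι → ℝ) {k : ℕ} {s : Finset ι} (hs : s.card = k) :
    ∑ i ∈ s, p i ≤ sumLargest p k :=
  le_csSup (bddAbove_sumLargest_set p k) ⟨s, hs, rfl⟩

lemma sumLargest_le (p : ι → ℝ) {k : ℕ} (hk : k ≤ Fintype.card ι) {B : ℝ}
    (h : ∀ s : Finset ι, s.card = k → ∑ i ∈ s, p i ≤ B) : sumLargest p k ≤ B := by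
  obtain ⟨s, -, hs⟩ := Finset.exists_subset_card_eq (s := (Finset.univ : Finset ι)) (n := k)
    (by simpa using hk)
  refine csSup_le ⟨_, s, hs, rfl⟩ ?_
  rintro x ⟨s, hs, rfl⟩
  exact h s hs

lemma sumLargest_comp_equiv (p : ι → ℝ) (σ : Equiv.Perm ι) (k : ℕ) :
    sumLargest (p ∘ σ) k = sumLargest p k := by
  classical
  unfold sumLargest
  congr 1
  ext x
  constructor
  · rintro ⟨s, hs, rfl⟩
    exact ⟨s.map σ.toEmbedding, by simpa using hs, by simp⟩
  · rintro ⟨s, hs, rfl⟩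
    exact ⟨s.map σ.symm.toEmbedding, by simpa using hs, by simp⟩

end SumLargest

lemma sum_mulVec_of_one_vecMul_eq_one {m n : Type*} [Fintype m] [Fintype n] {A : Matrix m n ℝ}
    (hA : 1 ᵥ* A = 1) (v : n → ℝ) : ∑ i, (A *ᵥ v) i = ∑ i, v i := by
  rw [← one_dotProduct, dotProduct_mulVec, hA, one_dotProduct]

lemma mul_apply_nonneg_of_nonneg {l m n : Type*} [Fintype m] {A : Matrix l m ℝ}
    {B : Matrix m n ℝ} (hA : ∀ i j, 0 ≤ A i j) (hB : ∀ i j, 0 ≤ B i j) (i : l) (j : n) :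
    0 ≤ (A * B) i j :=
  Finset.sum_nonneg fun k _ => mul_nonneg (hA i k) (hB k j)

section Rearrangement

variable {n : ℕ}

lemma exists_perm_antitone_comp (f : Fin n → ℝ) : ∃ σ : Equiv.Perm (Fin n), Antitone (f ∘ σ) :=
  ⟨Tuple.sort (OrderDual.toDual ∘ f), Tuple.monotone_sort (OrderDual.toDual ∘ f)⟩

lemma mul_sum_le_sum_mul_of_antitone {a d : Fin n → ℝ} (ha : Antitone a)
    (hd : ∀ m ≤ n, 0 ≤ ∑ i : Fin n with i.val < m, d i) {c : ℝ} (hc : ∀ i, c ≤ a i) :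
    c * ∑ i, d i ≤ ∑ i, d i * a i := by
  induction n generalizing c with
  | zero => simp
  | succ n ih =>
    have hprefix : ∀ m ≤ n, ∑ i : Fin n with i.val < m, d i.castSucc
        = ∑ i : Fin (n + 1) with i.val < m, d i := by
      intro m hm
      rw [Finset.sum_filter, Finset.sum_filter, Fin.sum_univ_castSucc]
      simp [not_lt.mpr hm]
    have hinit := ih (ha.comp_monotone Fin.strictMono_castSucc.monotone)
      (fun m hm => (hprefix m hm).symm ▸ hd m (by omega))
      (c := a (Fin.last n)) (fun i => ha (Fin.le_last _))
    have htot : 0 ≤ ∑ i, d i := by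
      simpa [Finset.filter_true_of_mem, Fin.is_le] using hd (n + 1) le_rfl
    calc c * ∑ i, d i ≤ a (Fin.last n) * ∑ i, d i :=
          mul_le_mul_of_nonneg_right (hc _) htot
      _ = a (Fin.last n) * ∑ i : Fin n, d i.castSucc + d (Fin.last n) * a (Fin.last n) := by
          rw [Fin.sum_univ_castSucc]; ring
      _ ≤ ∑ i, d i * a i := by
          rw [Fin.sum_univ_castSucc (fun i => d i * a i)]
          simpa using hinit

lemma sum_mul_le_sum_mul_of_antitone {a z w : Fin n → ℝ} (ha : Antitone a)
    (hpre : ∀ m ≤ n, ∑ i : Fin n with i.val < m, z i ≤ ∑ i : Fin n with i.val < m, w i)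
    (htot : ∑ i, z i = ∑ i, w i) :
    ∑ i, z i * a i ≤ ∑ i, w i * a i := by
  cases n with
  | zero => simp
  | succ n =>
    have := mul_sum_le_sum_mul_of_antitone (d := w - z) ha
      (fun m hm => by simpa [Finset.sum_sub_distrib] using hpre m hm)
      (c := a (Fin.last n)) (fun i => ha (Fin.le_last _))
    simp only [Pi.sub_apply, Finset.sum_sub_distrib, htot, sub_self, mul_zero, sub_mul] at this
    linarith

end Rearrangement

section Majorization

variable {n : ℕ}

lemma le_card_of_sum_eq_of_le_one {ι : Type*} [Fintype ι] {u : ι → ℝ} (hu1 : ∀ i, u i ≤ 1)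
    {k : ℕ} (hk : ∑ i, u i = k) : k ≤ Fintype.card ι := by
  have : (k : ℝ) ≤ Fintype.card ι := by
    simpa [hk] using Finset.sum_le_sum fun i (_ : i ∈ Finset.univ) => hu1 i
  exact_mod_cast this

lemma sum_mul_le_sum_prefix_of_antitone {v u : Fin n → ℝ} (hv : Antitone v)
    (hu0 : ∀ i, 0 ≤ u i) (hu1 : ∀ i, u i ≤ 1) {k : ℕ} (hk : ∑ i, u i = k) :
    ∑ i, u i * v i ≤ ∑ i : Fin n with i.val < k, v i := by
  have hkn : k ≤ n := by simpa using le_card_of_sum_eq_of_le_one hu1 hk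
  have hprefix (m : ℕ) : ∑ i : Fin n with i.val < m, (if i.val < k then (1 : ℝ) else 0)
      = ((min n (min m k) : ℕ) : ℝ) := by
    rw [Finset.sum_boole, Finset.filter_filter]
    simp_rw [← lt_min_iff]
    rw [Fin.card_filter_val_lt]
  calc ∑ i, u i * v i ≤ ∑ i, (if i.val < k then (1 : ℝ) else 0) * v i := by
        refine sum_mul_le_sum_mul_of_antitone hv (fun m hm => ?_) ?_
        · rw [hprefix, min_eq_right ((min_le_left _ _).trans hm), Nat.cast_min]
          refine le_min ?_ ?_
          · calc ∑ i : Fin n with i.val < m, u i ≤ ∑ i : Fin n with i.val < m, 1 :=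
                  Finset.sum_le_sum fun i _ => hu1 i
              _ = m := by simp [Fin.card_filter_val_lt, hm]
          · exact (Finset.sum_le_sum_of_subset_of_nonneg (Finset.filter_subset _ _)
              fun i _ _ => hu0 i).trans_eq hk
        · rw [hk, Finset.sum_boole, Fin.card_filter_val_lt, min_eq_right hkn]
    _ = ∑ i : Fin n with i.val < k, v i := by simp [ite_mul, Finset.sum_filter]

lemma sumLargest_le_sum_prefix_of_antitone {v : Fin n → ℝ} (hv : Antitone v) {k : ℕ}
    (hk : k ≤ n) : sumLargest v k ≤ ∑ i : Fin n with i.val < k, v i := by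
  refine sumLargest_le v (by simpa using hk) fun s hs => ?_
  have := sum_mul_le_sum_prefix_of_antitone hv (u := fun i => if i ∈ s then 1 else 0)
    (fun i => by split_ifs <;> norm_num) (fun i => by split_ifs <;> norm_num) (k := k)
    (by simp [hs])
  simpa [ite_mul, Finset.sum_ite_mem] using this

lemma sum_mul_le_sumLargest {v u : Fin n → ℝ} (hu0 : ∀ i, 0 ≤ u i) (hu1 : ∀ i, u i ≤ 1)
    {k : ℕ} (hk : ∑ i, u i = k) : ∑ i, u i * v i ≤ sumLargest v k := by
  obtain ⟨σ, hσ⟩ := exists_perm_antitone_comp v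
  have hcard : #{i : Fin n | i.val < k} = k := by
    simpa [Fin.card_filter_val_lt] using le_card_of_sum_eq_of_le_one hu1 hk
  calc ∑ i, u i * v i = ∑ i, u (σ i) * (v ∘ σ) i := (Equiv.sum_comp σ _).symm
    _ ≤ ∑ i : Fin n with i.val < k, (v ∘ σ) i :=
        sum_mul_le_sum_prefix_of_antitone hσ (fun i => hu0 _) (fun i => hu1 _)
          (by rw [Equiv.sum_comp σ u, hk])
    _ ≤ sumLargest (v ∘ σ) k := le_sumLargest _ hcard
    _ = sumLargest v k := sumLargest_comp_equiv v σ k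

lemma majorizes_mulVec_of_mem_doublyStochastic {M : Matrix (Fin n) (Fin n) ℝ}
    (hM : M ∈ doublyStochastic ℝ (Fin n)) (y : Fin n → ℝ) : Majorizes y (M *ᵥ y) := by
  intro k hk
  refine sumLargest_le _ hk fun s hs => ?_
  calc ∑ j ∈ s, (M *ᵥ y) j = ∑ l, (∑ j ∈ s, M j l) * y l := by
        simp only [mulVec, dotProduct, Finset.sum_mul]
        exact Finset.sum_comm
    _ ≤ sumLargest y k := by
        refine sum_mul_le_sumLargest (fun l => Finset.sum_nonneg fun j _ => hM.1 j l)
          (fun l => ?_) ?_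
        · exact (Finset.sum_le_sum_of_subset_of_nonneg (Finset.subset_univ s)
            fun j _ _ => hM.1 j l).trans_eq (sum_col_of_mem_doublyStochastic hM l)
        · rw [Finset.sum_comm]
          simp [sum_row_of_mem_doublyStochastic hM, hs]

lemma exists_perm_sum_mul_le_of_majorizes {x y : Fin n → ℝ} (hmaj : Majorizes y x)
    (hsum : ∑ i, x i = ∑ i, y i) (c : Fin n → ℝ) :
    ∃ σ : Equiv.Perm (Fin n), ∑ i, x i * c i ≤ ∑ i, y (σ i) * c i := by
  obtain ⟨τ, hτ⟩ := exists_perm_antitone_comp c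
  obtain ⟨ρ, hρ⟩ := exists_perm_antitone_comp y
  refine ⟨τ.symm.trans ρ, ?_⟩
  rw [← Equiv.sum_comp τ (fun i => x i * c i), ← Equiv.sum_comp τ (fun i => y _ * c i)]
  simp only [Equiv.trans_apply, Equiv.symm_apply_apply]
  refine sum_mul_le_sum_mul_of_antitone hτ (fun m hm => ?_) ?_
  · have hcard : #{i : Fin n | i.val < m} = m := by simp [Fin.card_filter_val_lt, hm]
    calc ∑ i : Fin n with i.val < m, x (τ i) ≤ sumLargest (x ∘ τ) m := le_sumLargest _ hcard
      _ = sumLargest x m := sumLargest_comp_equiv x τ m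
      _ ≤ sumLargest y m := hmaj m (by simpa using hm)
      _ = sumLargest (y ∘ ρ) m := (sumLargest_comp_equiv y ρ m).symm
      _ ≤ ∑ i : Fin n with i.val < m, y (ρ i) := sumLargest_le_sum_prefix_of_antitone hρ hm
  · rw [Equiv.sum_comp τ x, Equiv.sum_comp ρ y, hsum]

/-- Hardy–Littlewood–Pólya, via separation: were `x` outside the convex hull of the
permutations of `y`, a linear functional separating them would contradict
`exists_perm_sum_mul_le_of_majorizes`. -/
lemma exists_mem_doublyStochastic_mulVec_eq_of_majorizes {x y : Fin n → ℝ}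
    (hmaj : Majorizes y x) (hsum : ∑ i, x i = ∑ i, y i) :
    ∃ M ∈ doublyStochastic ℝ (Fin n), M *ᵥ y = x := by
  set K := (fun M => M *ᵥ y) '' (doublyStochastic ℝ (Fin n) : Set (Matrix (Fin n) (Fin n) ℝ))
  have hK : Convex ℝ K := by
    rintro _ ⟨A, hA, rfl⟩ _ ⟨B, hB, rfl⟩ a b ha hb hab
    exact ⟨a • A + b • B, convex_doublyStochastic hA hB ha hb hab, by
      simp [add_mulVec, smul_mulVec]⟩
  have hperm : Set.range (fun σ : Equiv.Perm (Fin n) => y ∘ σ) ⊆ K := by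
    rintro _ ⟨σ, rfl⟩
    exact ⟨σ.permMatrix ℝ, permMatrix_mem_doublyStochastic, permMatrix_mulVec σ⟩
  suffices hx : x ∈ convexHull ℝ (Set.range fun σ : Equiv.Perm (Fin n) => y ∘ σ) from
    convexHull_min hperm hK hx
  by_contra hx
  obtain ⟨f, u, hfK, hfx⟩ := geometric_hahn_banach_closed_point (convex_convexHull ℝ _)
    ((Set.finite_range _).isCompact_convexHull ℝ).isClosed hx
  have hf : ∀ v, f v = ∑ i, v i * f (fun j => if i = j then 1 else 0) :=
    fun v => f.toLinearMap.pi_apply_eq_sum_univ v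
  obtain ⟨σ, hσ⟩ := exists_perm_sum_mul_le_of_majorizes hmaj hsum
    fun i => f (fun j => if i = j then 1 else 0)
  have hfσ := hfK (y ∘ σ) (subset_convexHull ℝ _ ⟨σ, rfl⟩)
  rw [hf] at hfσ hfx
  simp only [Function.comp_apply] at hfσ
  linarith

theorem exists_mem_doublyStochastic_mulVec_eq_iff {x y : Fin n → ℝ} :
    (∃ M ∈ doublyStochastic ℝ (Fin n), M *ᵥ y = x) ↔
      Majorizes y x ∧ ∑ i, x i = ∑ i, y i := by
  refine ⟨?_, fun h => exists_mem_doublyStochastic_mulVec_eq_of_majorizes h.1 h.2⟩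
  rintro ⟨M, hM, rfl⟩
  exact ⟨majorizes_mulVec_of_mem_doublyStochastic hM y,
    sum_mulVec_of_one_vecMul_eq_one (one_vecMul_of_mem_doublyStochastic hM) y⟩

end Majorization

section Embedding

variable {ι κ : Type*} [DecidableEq ι] {box : κ → ι} {D : ι → ℕ}

variable (box D) in
/-- The embedding `Γ` as a matrix. -/
noncomputable def embeddingMatrix : Matrix κ ι ℝ :=
  of fun j i => if box j = i then (D i : ℝ)⁻¹ else 0

variable (box) in
def fiberSumMatrix : Matrix ι κ ℝ :=
  of fun i j => if box j = i then 1 else 0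

variable (box D) in
lemma embeddingMatrix_mulVec [Fintype ι] (p : ι → ℝ) :
    embeddingMatrix box D *ᵥ p = fun j => p (box j) / D (box j) := by
  ext j
  simp [embeddingMatrix, mulVec, dotProduct, div_eq_inv_mul]

lemma embeddingMatrix_mulVec_natCast [Fintype ι] (hD : ∀ i, D i ≠ 0) :
    embeddingMatrix box D *ᵥ (fun i => (D i : ℝ)) = 1 := by
  ext j
  simp [embeddingMatrix_mulVec, hD]

lemma one_vecMul_embeddingMatrix [Fintype κ] (hbox : ∀ i, #{j | box j = i} = D i)
    (hD : ∀ i, D i ≠ 0) : 1 ᵥ* embeddingMatrix box D = 1 := by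
  ext i
  simp [embeddingMatrix, vecMul, dotProduct, Finset.sum_ite, hbox, hD]

lemma fiberSumMatrix_mulVec_one [Fintype κ] (hbox : ∀ i, #{j | box j = i} = D i) :
    fiberSumMatrix box *ᵥ 1 = fun i => (D i : ℝ) := by
  ext i
  simp [fiberSumMatrix, mulVec, dotProduct, Finset.sum_boole, hbox]

lemma one_vecMul_fiberSumMatrix [Fintype ι] : 1 ᵥ* fiberSumMatrix (κ := κ) box = 1 := by
  ext j
  simp [fiberSumMatrix, vecMul, dotProduct]

lemma fiberSumMatrix_mul_embeddingMatrix [Fintype κ] (hbox : ∀ i, #{j | box j = i} = D i)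
    (hD : ∀ i, D i ≠ 0) : fiberSumMatrix box * embeddingMatrix box D = 1 := by
  ext i m
  by_cases him : i = m
  · subst him
    simp [fiberSumMatrix, embeddingMatrix, mul_apply, one_apply, Finset.sum_ite,
      Finset.filter_filter, hbox, hD]
  · simp only [fiberSumMatrix, embeddingMatrix, mul_apply, one_apply, him, of_apply]
    exact Finset.sum_eq_zero fun j _ => by grind

lemma embeddingMatrix_nonneg (j : κ) (i : ι) : 0 ≤ embeddingMatrix box D j i := by
  simp only [embeddingMatrix, of_apply]
  positivity

lemma fiberSumMatrix_nonneg (i : ι) (j : κ) : 0 ≤ fiberSumMatrix box i j := by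
  simp only [fiberSumMatrix, of_apply]
  positivity

lemma embeddingMatrix_mul_mul_fiberSumMatrix_mem_doublyStochastic [Fintype ι] [Fintype κ]
    [DecidableEq κ] (hbox : ∀ i, #{j | box j = i} = D i) (hD : ∀ i, D i ≠ 0)
    {Λ : Matrix ι ι ℝ} (hΛ0 : ∀ i j, 0 ≤ Λ i j) (hΛcol : 1 ᵥ* Λ = 1)
    (hΛD : Λ *ᵥ (fun i => (D i : ℝ)) = fun i => (D i : ℝ)) :
    embeddingMatrix box D * Λ * fiberSumMatrix box ∈ doublyStochastic ℝ κ := by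
  refine ⟨mul_apply_nonneg_of_nonneg
    (mul_apply_nonneg_of_nonneg embeddingMatrix_nonneg hΛ0) fiberSumMatrix_nonneg, ?_, ?_⟩
  · rw [← mulVec_mulVec, ← mulVec_mulVec, fiberSumMatrix_mulVec_one hbox, hΛD,
      embeddingMatrix_mulVec_natCast hD]
  · rw [← vecMul_vecMul, ← vecMul_vecMul, one_vecMul_embeddingMatrix hbox hD, hΛcol,
      one_vecMul_fiberSumMatrix]

lemma fiberSumMatrix_mul_mul_embeddingMatrix [Fintype ι] [Fintype κ] [DecidableEq κ]
    (hbox : ∀ i, #{j | box j = i} = D i) (hD : ∀ i, D i ≠ 0) {M : Matrix κ κ ℝ}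
    (hM : M ∈ doublyStochastic ℝ κ) :
    (∀ i m, 0 ≤ (fiberSumMatrix box * M * embeddingMatrix box D) i m) ∧
      1 ᵥ* (fiberSumMatrix box * M * embeddingMatrix box D) = 1 ∧
      (fiberSumMatrix box * M * embeddingMatrix box D) *ᵥ (fun i => (D i : ℝ)) =
        fun i => (D i : ℝ) := by
  refine ⟨mul_apply_nonneg_of_nonneg
    (mul_apply_nonneg_of_nonneg fiberSumMatrix_nonneg hM.1) embeddingMatrix_nonneg, ?_, ?_⟩
  · rw [← vecMul_vecMul, ← vecMul_vecMul, one_vecMul_fiberSumMatrix,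
      one_vecMul_of_mem_doublyStochastic hM, one_vecMul_embeddingMatrix hbox hD]
  · rw [← mulVec_mulVec, ← mulVec_mulVec, embeddingMatrix_mulVec_natCast hD,
      mulVec_one_of_mem_doublyStochastic hM, fiberSumMatrix_mulVec_one hbox]

theorem exists_stochastic_fixing_iff_exists_doublyStochastic [Fintype ι] [Fintype κ]
    [DecidableEq κ] (hbox : ∀ i, #{j | box j = i} = D i) (hD : ∀ i, D i ≠ 0) (p q : ι → ℝ) :
    (∃ Λ : Matrix ι ι ℝ, (∀ i j, 0 ≤ Λ i j) ∧ 1 ᵥ* Λ = 1 ∧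
        Λ *ᵥ (fun i => (D i : ℝ)) = (fun i => (D i : ℝ)) ∧ Λ *ᵥ p = q) ↔
      ∃ M ∈ doublyStochastic ℝ κ,
        M *ᵥ (embeddingMatrix box D *ᵥ p) = embeddingMatrix box D *ᵥ q := by
  have hRE := fiberSumMatrix_mul_embeddingMatrix hbox hD
  constructor
  · rintro ⟨Λ, hΛ0, hΛcol, hΛD, rfl⟩
    refine ⟨_, embeddingMatrix_mul_mul_fiberSumMatrix_mem_doublyStochastic hbox hD hΛ0 hΛcol
      hΛD, ?_⟩
    rw [mulVec_mulVec, Matrix.mul_assoc, Matrix.mul_assoc, hRE, Matrix.mul_one, ← mulVec_mulVec]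
  · rintro ⟨M, hM, hMpq⟩
    obtain ⟨h0, hcol, hfix⟩ := fiberSumMatrix_mul_mul_embeddingMatrix hbox hD hM
    refine ⟨_, h0, hcol, hfix, ?_⟩
    rw [← mulVec_mulVec, ← mulVec_mulVec, hMpq, mulVec_mulVec, hRE, one_mulVec]

end Embedding

theorem gibbs_preserving_iff_embedded_majorization_general {d N : ℕ}
    (D : Fin d → ℕ) (hDpos : ∀ i, 0 < D i)
    (box : Fin N → Fin d)
    (hbox : ∀ i : Fin d, (Finset.univ.filter fun j => box j = i).card = D i)
    (p q : Fin d → ℝ) (hp : IsProbVec p) (hq : IsProbVec q) :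
    (∃ Λ : Matrix (Fin d) (Fin d) ℝ,
        (∀ i j, 0 ≤ Λ i j) ∧ (∀ j, ∑ i, Λ i j = 1) ∧
        (Λ.mulVec (fun i => (D i : ℝ) / (N : ℝ)) = fun i => (D i : ℝ) / (N : ℝ)) ∧
        Λ.mulVec p = q) ↔
      Majorizes (fun j : Fin N => p (box j) / (D (box j) : ℝ))
        (fun j : Fin N => q (box j) / (D (box j) : ℝ)) := by
  have hD i : D i ≠ 0 := (hDpos i).ne'
  have hN : (N : ℝ) ≠ 0 := by
    obtain ⟨i⟩ : Nonempty (Fin d) := by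
      by_contra h
      simpa [not_nonempty_iff.mp h] using hp.2
    obtain ⟨j, -⟩ := Finset.card_pos.mp ((hbox i).symm ▸ hDpos i)
    exact_mod_cast j.pos.ne'
  have hcol (Λ : Matrix (Fin d) (Fin d) ℝ) : (∀ j, ∑ i, Λ i j = 1) ↔ 1 ᵥ* Λ = 1 := by
    simp [funext_iff, vecMul, dotProduct]
  have hfix (Λ : Matrix (Fin d) (Fin d) ℝ) :
      Λ *ᵥ (fun i => (D i : ℝ) / N) = (fun i => (D i : ℝ) / N) ↔
        Λ *ᵥ (fun i => (D i : ℝ)) = fun i => (D i : ℝ) := by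
    have hγ : (fun i => (D i : ℝ) / N) = (N : ℝ)⁻¹ • fun i => (D i : ℝ) := by
      ext i
      simp [div_eq_inv_mul]
    rw [hγ, mulVec_smul, (smul_right_injective _ (inv_ne_zero hN)).eq_iff]
  simp only [hcol, hfix, ← embeddingMatrix_mulVec box D]
  rw [exists_stochastic_fixing_iff_exists_doublyStochastic hbox hD,
    exists_mem_doublyStochastic_mulVec_eq_iff,
    sum_mulVec_of_one_vecMul_eq_one (one_vecMul_embeddingMatrix hbox hD),
    sum_mulVec_of_one_vecMul_eq_one (one_vecMul_embeddingMatrix hbox hD), hp.2, hq.2]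
  exact and_iff_left rfl

/-- There exists a Gibbs-preserving stochastic matrix mapping `p` to `q` iff the
embedded vector `Γ(p)` majorises `Γ(q)`, where the embedding is with respect to the
rational Gibbs distribution `γᵢ = Dᵢ/N`. -/
theorem gibbs_preserving_iff_embedded_majorization {d N : ℕ}
    (D : Fin d → ℕ) (hDpos : ∀ i, 0 < D i) (hN : ∑ i, D i = N)
    (box : Fin N → Fin d)
    (hbox : ∀ i : Fin d, (Finset.univ.filter fun j => box j = i).card = D i)
    (p q : Fin d → ℝ) (hp : IsProbVec p) (hq : IsProbVec q) :
    (∃ Λ : Matrix (Fin d) (Fin d) ℝ,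
        (∀ i j, 0 ≤ Λ i j) ∧ (∀ j, ∑ i, Λ i j = 1) ∧
        (Λ.mulVec (fun i => (D i : ℝ) / (N : ℝ)) = fun i => (D i : ℝ) / (N : ℝ)) ∧
        Λ.mulVec p = q) ↔
      Majorizes (fun j : Fin N => p (box j) / (D (box j) : ℝ))
        (fun j : Fin N => q (box j) / (D (box j) : ℝ)) :=
  gibbs_preserving_iff_embedded_majorization_general D hDpos box hbox p q hp hq
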